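/- arXiv:1105.2849 — 4 statements merged into one kernel-verified Lean document; each statement's English description precedes it below -/
import Mathlib

section
/- The word (0001)^ω contains no factor of the form xᴿ·x·x·xᴿ, where x is a nonempty binary word and xᴿ denotes its reversal. -/
/-- `L` is a factor of the periodic infinite word `(0001)^ω`. -/
def IsFactorP (L : List Bool) : Prop :=
  ∃ n, L <:+: (List.replicate n [false, false, false, true]).flatten

lemma flat_len (n : ℕ) :
    ((List.replicate n [false, false, false, true]).flatten).length = 4 * n := by
  simp [List.length_flatten]; ring

lemma flat_get (n j : ℕ) (h : j < 4 * n) :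
    ((List.replicate n [false, false, false, true]).flatten)[j]? =
      some (decide (j % 4 = 3)) := by
  induction n generalizing j with
  | zero => omega
  | succ m ih =>
    rw [List.replicate_succ, List.flatten_cons]
    by_cases hj : j < 4
    · rw [List.getElem?_append_left (by simpa using hj)]
      interval_cases j <;> simp
    · rw [List.getElem?_append_right (by simpa using not_lt.mp hj)]
      have h4 : (4 : ℕ) = List.length [false, false, false, true] := rfl
      rw [show j - List.length [false, false, false, true] = j - 4 from rfl,
        ih (j - 4) (by omega)]
      congr 1
      simp only [decide_eq_decide]
      omega

theorem stmt2 (x : List Bool) (hx : x ≠ []) :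
    ¬ IsFactorP (x.reverse ++ x ++ x ++ x.reverse) := by
  rintro ⟨n, s, t, hst⟩
  set k := x.length with hkdef
  have hk : 1 ≤ k := List.length_pos_iff.mpr hx
  set i := s.length with hidef
  have hLlen : (x.reverse ++ x ++ x ++ x.reverse).length = 4 * k := by
    simp [hkdef]; ring
  have hbound : i + 4 * k ≤ 4 * n := by
    have := congrArg List.length hst
    simp only [List.length_append, List.length_reverse, flat_len, ← hkdef] at this
    omega
  have key : ∀ q, q < 4 * k →
      (x.reverse ++ x ++ x ++ x.reverse)[q]? = some (decide ((i + q) % 4 = 3)) := by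
    intro q hq
    have h1 := flat_get n (i + q) (by omega)
    rw [← hst, List.append_assoc, List.getElem?_append_right (by omega),
      show i + q - s.length = q by omega,
      List.getElem?_append_left (by omega)] at h1
    exact h1
  -- component lemmas
  have hA : ∀ p, p < k → x[k - 1 - p]? = some (decide ((i + p) % 4 = 3)) := by
    intro p hp
    have h1 := key p (by omega)
    rw [List.getElem?_append_left (by simp only [List.length_append, List.length_reverse, ← hkdef]; omega),
      List.getElem?_append_left (by simp only [List.length_append, List.length_reverse, ← hkdef]; omega),
      List.getElem?_append_left (by simp only [List.length_append, List.length_reverse, ← hkdef]; omega),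
      List.getElem?_reverse (by simp only [← hkdef]; omega)] at h1
    rw [show x.length - 1 - p = k - 1 - p by rw [← hkdef]] at h1
    exact h1
  have hB : ∀ p, p < k → x[p]? = some (decide ((i + k + p) % 4 = 3)) := by
    intro p hp
    have h1 := key (k + p) (by omega)
    rw [List.getElem?_append_left (by simp only [List.length_append, List.length_reverse, ← hkdef]; omega),
      List.getElem?_append_left (by simp only [List.length_append, List.length_reverse, ← hkdef]; omega),
      List.getElem?_append_right (by simp only [List.length_append, List.length_reverse, ← hkdef]; omega)] at h1
    simp only [List.length_reverse, ← hkdef, show k + p - k = p by omega] at h1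
    rw [show i + k + p = i + (k + p) by omega]
    exact h1
  have hC : ∀ p, p < k → x[p]? = some (decide ((i + 2 * k + p) % 4 = 3)) := by
    intro p hp
    have h1 := key (2 * k + p) (by omega)
    rw [List.getElem?_append_left (by simp only [List.length_append, List.length_reverse, ← hkdef]; omega),
      List.getElem?_append_right (by simp only [List.length_append, List.length_reverse, ← hkdef]; omega)] at h1
    simp only [List.length_append, List.length_reverse, ← hkdef,
      show 2 * k + p - (k + k) = p by omega] at h1
    rw [show i + 2 * k + p = i + (2 * k + p) by omega]
    exact h1
  -- find a position with a `true`
  have htrue : true ∈ x := by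
    have hq := key (3 - i % 4) (by omega)
    have hd : decide ((i + (3 - i % 4)) % 4 = 3) = true := by
      simp only [decide_eq_true_eq]; omega
    rw [hd] at hq
    have hmem := List.mem_of_getElem? hq
    simp only [List.mem_append, List.mem_reverse, or_self_right, or_self] at hmem
    tauto
  obtain ⟨p₀, hp₀, hxp₀⟩ := List.mem_iff_getElem.mp htrue
  rw [← hkdef] at hp₀
  have hxp₀' : x[p₀]? = some true := by
    rw [List.getElem?_eq_getElem (by omega), hxp₀]
  -- extract arithmetic facts
  have e1 : (i + k + p₀) % 4 = 3 := by
    have := (hB p₀ hp₀).symm.trans hxp₀'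
    simpa using this
  have e2 : (i + 2 * k + p₀) % 4 = 3 := by
    have := (hC p₀ hp₀).symm.trans hxp₀'
    simpa using this
  have hip : (i + p₀) % 4 = 3 := by omega
  have e3 : x[k - 1 - p₀]? = some true := by
    rw [hA p₀ hp₀]
    simp [hip]
  have e4 : (i + k + (k - 1 - p₀)) % 4 = 3 := by
    have := (hB (k - 1 - p₀) (by omega)).symm.trans e3
    simpa using this
  omega
end

section
/- The word (0001)^ω contains no factor of the form g(x)·x·x·g(x), where x is a nonempty binary word and g(x) is the reverse complement of x. -/
namespace List

variable {α : Type*}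

theorem exists_append_eq_flatten_replicate_of_suffix {B : List α} (hB : B ≠ []) {S : List α} :
    ∀ {n : ℕ}, S <:+ (replicate n B).flatten →
      ∃ q m, q.length < B.length ∧ q <+: B ∧ q ++ S = (replicate m B).flatten
  | 0, h => ⟨[], 0, length_pos_iff.mpr hB, nil_prefix, by simpa using h⟩
  | n + 1, ⟨u, h⟩ => by
    rw [replicate_succ, flatten_cons, append_eq_append_iff] at h
    rcases h with ⟨r, rfl, rfl⟩ | ⟨t, -, ht⟩
    · rcases eq_or_ne r [] with rfl | hr
      · exact ⟨[], n, length_pos_iff.mpr hB, nil_prefix, by simp⟩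
      · refine ⟨u, n + 1, ?_, prefix_append u r, ?_⟩
        · simpa using length_pos_iff.mpr hr
        · rw [replicate_succ, flatten_cons, append_assoc]
    · exact exists_append_eq_flatten_replicate_of_suffix hB ⟨t, ht.symm⟩

theorem exists_append_prefix_flatten_replicate_of_infix {B : List α} (hB : B ≠ []) {L : List α}
    {n : ℕ} (h : L <:+: (replicate n B).flatten) :
    ∃ q m, q.length < B.length ∧ q <+: B ∧ q ++ L <+: (replicate m B).flatten := by
  obtain ⟨S, hLS, hS⟩ := infix_iff_prefix_suffix.mp h
  obtain ⟨q, m, hq, hqB, hqS⟩ := exists_append_eq_flatten_replicate_of_suffix hB hS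
  exact ⟨q, m, hq, hqB, hqS ▸ (prefix_append_right_inj q).mpr hLS⟩

end List

open List

lemma count_true_take_replicate_false_append_true (k j : ℕ) :
    ((replicate k false ++ [true]).take j).count true = if k < j then 1 else 0 := by
  rw [take_append, take_replicate]
  split_ifs with h
  · simp [count_replicate, take_of_length_le (show [true].length ≤ j - k by simp; omega)]
  · simp [count_replicate, show j - k = 0 by omega]

lemma mul_count_true_le_of_prefix_replicate_false_append_true {k : ℕ} {P : List Bool}
    (h : P <+: replicate k false ++ [true]) : (k + 1) * P.count true ≤ P.length := by
  rw [prefix_iff_eq_take.mp h, count_true_take_replicate_false_append_true, length_take]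
  split_ifs <;> simp
  omega

lemma mul_count_true_le_of_prefix_flatten_replicate {k : ℕ} {P : List Bool} :
    ∀ {n : ℕ}, P <+: (replicate n (replicate k false ++ [true])).flatten →
      (k + 1) * P.count true ≤ P.length
  | 0, h => by simp [prefix_nil.mp h]
  | n + 1, ⟨t, h⟩ => by
    rw [replicate_succ, flatten_cons, append_eq_append_iff] at h
    rcases h with ⟨r, hP, -⟩ | ⟨s, rfl, hs⟩
    · exact mul_count_true_le_of_prefix_replicate_false_append_true ⟨r, hP.symm⟩
    · have hblock := mul_count_true_le_of_prefix_replicate_false_append_true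
        (prefix_refl (replicate k false ++ [true]))
      have hs := mul_count_true_le_of_prefix_flatten_replicate ⟨t, hs.symm⟩
      simp only [count_append, length_append, mul_add] at hblock hs ⊢
      simp only [length_replicate, length_singleton] at hblock ⊢
      omega

lemma mul_count_true_le_of_infix_flatten_replicate {k n : ℕ} {L : List Bool}
    (h : L <:+: (replicate n (replicate k false ++ [true])).flatten) :
    (k + 1) * L.count true ≤ L.length + k := by
  obtain ⟨q, m, hq, hqB, hqL⟩ := exists_append_prefix_flatten_replicate_of_infix (by simp) h
  simp only [length_append, length_replicate, length_singleton, Nat.lt_succ_iff] at hq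
  have hq0 : q.count true = 0 := by
    rw [prefix_iff_eq_take.mp hqB, count_true_take_replicate_false_append_true, if_neg (by omega)]
  have := mul_count_true_le_of_prefix_flatten_replicate hqL
  rw [count_append, length_append, hq0, zero_add] at this
  omega

lemma count_true_map_not (x : List Bool) : (x.map (fun b => !b)).count true = x.count false := by
  simp [count_eq_countP, countP_map, Function.comp_def]

theorem stmt5 (x : List Bool) (hx : x ≠ []) :
    ¬ IsFactorP ((List.map (fun b => !b) x).reverse ++ x ++ x ++ (List.map (fun b => !b) x).reverse) := by
  rintro ⟨n, h⟩
  have hbound := mul_count_true_le_of_infix_flatten_replicate (k := 3) h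
  have hsum := count_true_add_count_false x
  have hpos := length_pos_iff.mpr hx
  simp only [count_append, length_append, count_reverse, length_reverse, length_map,
    count_true_map_not] at hbound
  omega
end

section
/- Let w = ∏_{i≥0} 0²1^{t_i+2}, where t_i is the Thue–Morse sequence. Then w contains no factor of the form x·x·x̄·x, where x is a nonempty binary word and x̄ is its letterwise complement. -/
def tm (i : Nat) : Nat := (Nat.digits 2 i).sum % 2

/-- Block `0 0 1^(t_i+2)` of the word **w**. -/
def wBlock (i : Nat) : List Bool := [false, false] ++ List.replicate (tm i + 2) true

/-- Prefix of **w** made of the first `n` blocks. -/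
def wPrefix (n : Nat) : List Bool := ((List.range n).map wBlock).flatten

/-- `L` is a factor of the infinite word **w**. -/
def IsFactorW (L : List Bool) : Prop := ∃ n, L <:+: wPrefix n

/-! ### Basic facts about the Thue–Morse sequence `tm` -/

lemma tm_zero : tm 0 = 0 := by simp [tm]

lemma tm_lt_two (n : Nat) : tm n < 2 := Nat.mod_lt _ (by norm_num)

lemma tm_rec (n : Nat) (hn : 0 < n) : tm n = (n % 2 + tm (n / 2)) % 2 := by
  unfold tm
  rw [Nat.digits_def' (by norm_num) hn]
  simp [List.sum_cons, Nat.add_mod]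

/-- A fuel-based, kernel-computable version of `tm`. -/
def tmA : Nat → Nat → Nat
  | 0, _ => 0
  | f+1, n => if n = 0 then 0 else (n % 2 + tmA f (n / 2)) % 2

lemma tm_two_mul (n : Nat) : tm (2 * n) = tm n := by
  rcases Nat.eq_zero_or_pos n with rfl | hn
  · rfl
  · rw [tm_rec (2*n) (by omega)]
    have h1 : 2 * n % 2 = 0 := by omega
    have h2 : 2 * n / 2 = n := by omega
    rw [h1, h2]
    have := tm_lt_two n; omega

lemma tm_two_mul_add_one (n : Nat) : tm (2 * n + 1) = (tm n + 1) % 2 := by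
  rw [tm_rec (2*n+1) (by omega)]
  have h1 : (2 * n + 1) % 2 = 1 := by omega
  have h2 : (2 * n + 1) / 2 = n := by omega
  rw [h1, h2]
  have := tm_lt_two n; omega

lemma tmA_eq (f n : Nat) (h : n ≤ f) : tmA f n = tm n := by
  induction f generalizing n with
  | zero => interval_cases n; exact tm_zero.symm
  | succ f ih =>
    rcases Nat.eq_zero_or_pos n with rfl | hn
    · rw [tmA, if_pos rfl, tm_zero]
    · rw [tmA, if_neg hn.ne', ih _ (by omega), tm_rec n hn]

def tm' (n : Nat) : Nat := tmA n n

lemma tm'_eq (n : Nat) : tm' n = tm n := tmA_eq n n le_rfl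

lemma tm_mul_two_add (m b : Nat) (hb : b < 2) : tm (2 * m + b) = (tm m + tm b) % 2 := by
  interval_cases b
  · simp only [Nat.add_zero]
    rw [tm_two_mul, tm_zero]; have := tm_lt_two m; omega
  · rw [tm_two_mul_add_one]; norm_num [tm]

lemma tm_pow_mul_add (k m b : Nat) (hb : b < 2 ^ k) :
    tm (2 ^ k * m + b) = (tm m + tm b) % 2 := by
  induction k generalizing b with
  | zero =>
    interval_cases b
    simp [tm_zero]
    have := tm_lt_two m; omega
  | succ k ih =>
    have hb2 : b / 2 < 2 ^ k := by omega
    have key : 2 ^ (k+1) * m + b = 2 * (2 ^ k * m + b / 2) + b % 2 := by ring_nf; omega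
    rw [key, tm_mul_two_add _ _ (Nat.mod_lt _ (by norm_num)), ih _ hb2]
    have hb' : b = 2 * (b / 2) + b % 2 := by omega
    have : tm b = (tm (b/2) + tm (b % 2)) % 2 := by
      conv_lhs => rw [hb']
      exact tm_mul_two_add _ _ (Nat.mod_lt _ (by norm_num))
    rw [this]
    have := tm_lt_two m; have := tm_lt_two (b/2); have := tm_lt_two (b % 2); omega

lemma tm_eight_mul_add (m b : Nat) (hb : b < 8) : tm (8 * m + b) = (tm m + tm b) % 2 := by
  have := tm_pow_mul_add 3 m b (by norm_num [hb])
  norm_num at this ⊢; omega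

/-! ### Partial sums of `tm` -/

def sumT (j : Nat) : Nat := ((List.range j).map tm).sum

lemma sumT_succ (n : Nat) : sumT (n + 1) = sumT n + tm n := by
  simp [sumT, List.range_succ]

lemma sumT_even (m : Nat) : sumT (2 * m) = m := by
  induction m with
  | zero => rfl
  | succ m ih =>
    have : 2 * (m + 1) = (2 * m + 1) + 1 := by ring
    rw [this, sumT_succ, sumT_succ, ih, tm_two_mul, tm_two_mul_add_one]
    have := tm_lt_two m; omega

lemma sumT_bounds (j : Nat) : j ≤ 2 * sumT j + 1 ∧ 2 * sumT j ≤ j + 1 := by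
  rcases Nat.even_or_odd j with ⟨m, hm⟩ | ⟨m, hm⟩
  · subst hm; rw [(by ring : m + m = 2 * m), sumT_even]; omega
  · subst hm
    rw [sumT_succ, sumT_even]
    have := tm_lt_two (2 * m); omega

lemma sumT_mono : Monotone sumT := by
  apply monotone_nat_of_le_succ
  intro n; rw [sumT_succ]; omega

/-! ### Counting falses in prefixes of w -/

lemma count_true_add_count_false (l : List Bool) : l.count true + l.count false = l.length := by
  induction l with
  | nil => rfl
  | cons a l ih => cases a <;> simp [List.count_cons] <;> omega

lemma wPrefix_succ (n : Nat) : wPrefix (n + 1) = wPrefix n ++ wBlock n := by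
  simp [wPrefix, List.range_succ]

lemma length_wBlock (i : Nat) : (wBlock i).length = tm i + 4 := by
  simp [wBlock]

lemma count_false_wBlock (i : Nat) : (wBlock i).count false = 2 := by
  simp [wBlock, List.count_append, List.count_replicate]

lemma length_wPrefix (n : Nat) : (wPrefix n).length = 4 * n + sumT n := by
  induction n with
  | zero => rfl
  | succ n ih => rw [wPrefix_succ, List.length_append, ih, length_wBlock, sumT_succ]; ring

lemma count_false_wPrefix (n : Nat) : (wPrefix n).count false = 2 * n := by
  induction n with
  | zero => rfl
  | succ n ih => rw [wPrefix_succ, List.count_append, ih, count_false_wBlock]; ring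

/-- Offset bound within a block prefix. -/
lemma block_prefix_offset (i : Nat) (r : List Bool) (hr : r <+: wBlock i) :
    4 * r.length ≤ 9 * r.count false + 2 ∧ 9 * r.count false ≤ 4 * r.length + 10 := by
  have h2 := tm_lt_two i
  interval_cases h : tm i
  · have hb : wBlock i = [false, false, true, true] := by
      simp [wBlock, h, List.replicate]
    rw [hb] at hr
    have : r ∈ ([false, false, true, true] : List Bool).inits := (List.mem_inits _ _).2 hr
    fin_cases this <;> simp [List.count_cons]
  · have hb : wBlock i = [false, false, true, true, true] := by
      simp [wBlock, h, List.replicate]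
    rw [hb] at hr
    have : r ∈ ([false, false, true, true, true] : List Bool).inits := (List.mem_inits _ _).2 hr
    fin_cases this <;> simp [List.count_cons]

/-- Main discrepancy bound: any prefix `u` of any `wPrefix n` satisfies
    `-4 ≤ 9·(count false u) - 4·|u| ≤ 12`. -/
lemma F_bound (n : Nat) (u v : List Bool) (h : wPrefix n = u ++ v) :
    4 * u.length ≤ 9 * u.count false + 4 ∧ 9 * u.count false ≤ 4 * u.length + 12 := by
  induction n generalizing u v with
  | zero =>
    have h0 := congrArg List.length h
    simp [wPrefix] at h0
    have : u = [] := List.eq_nil_of_length_eq_zero (by omega)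
    subst this; simp
  | succ n ih =>
    rw [wPrefix_succ] at h
    by_cases hl : u.length ≤ (wPrefix n).length
    · have hu : u <+: wPrefix n :=
        List.prefix_of_prefix_length_le ⟨v, h.symm⟩ (List.prefix_append _ _) hl
      obtain ⟨v', hv'⟩ := hu
      exact ih u v' hv'.symm
    · push_neg at hl
      have hp : wPrefix n <+: u :=
        List.prefix_of_prefix_length_le (List.prefix_append _ _) ⟨v, h.symm⟩ (le_of_lt hl)
      obtain ⟨r, hr⟩ := hp
      have hrb : r <+: wBlock n := by
        refine ⟨v, ?_⟩
        have := h
        rw [← hr, List.append_assoc] at this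
        exact (List.append_cancel_left this).symm
      have hoff := block_prefix_offset n r hrb
      have hlen : u.length = 4 * n + sumT n + r.length := by
        rw [← hr, List.length_append, length_wPrefix]
      have hcf : u.count false = 2 * n + r.count false := by
        rw [← hr, List.count_append, count_false_wPrefix]
      have hs := sumT_bounds n
      omega

lemma count_false_map_not (x : List Bool) :
    (x.map (fun b => !b)).count false = x.count true := by
  simpa using List.count_map_of_injective x (fun b => !b)
    (by intro a b; cases a <;> cases b <;> simp) true

/-- Lemma A: if `x̄ ++ x` occurs as a factor in some `wPrefix m`, then `|x| ≤ 16`. -/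
lemma length_le_16 (m : Nat) (x u v : List Bool)
    (h : wPrefix m = u ++ ((x.map (fun b => !b)) ++ x) ++ v) : x.length ≤ 16 := by
  have h1 : wPrefix m = u ++ (((x.map (fun b => !b)) ++ x) ++ v) := by
    rw [h, List.append_assoc]
  have h2 : wPrefix m = (u ++ ((x.map (fun b => !b)) ++ x)) ++ v := by
    rw [h]
  have b1 := F_bound m u _ h1
  have b2 := F_bound m _ v h2
  have hc : (u ++ ((x.map (fun b => !b)) ++ x)).count false
      = u.count false + x.count true + x.count false := by
    have := count_true_add_count_false x
    simp [List.count_append, count_false_map_not]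
    omega
  have hl : (u ++ ((x.map (fun b => !b)) ++ x)).length = u.length + 2 * x.length := by
    simp [List.length_append]; omega
  have := count_true_add_count_false x
  omega

/-! ### Transfer of short factors into `wPrefix 64` -/

def chunk (j k : Nat) : List Bool := ((List.range' j k).map wBlock).flatten

lemma wPrefix_add (n k : Nat) : wPrefix (n + k) = wPrefix n ++ chunk n k := by
  induction k with
  | zero => simp [chunk]
  | succ k ih =>
    rw [← Nat.add_assoc, wPrefix_succ, ih]
    unfold chunk
    rw [List.range'_concat]
    simp [List.append_assoc]

lemma wPrefix_prefix (n m : Nat) (h : n ≤ m) : wPrefix n <+: wPrefix m := by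
  obtain ⟨k, rfl⟩ := Nat.exists_eq_add_of_le h
  rw [wPrefix_add]; exact List.prefix_append _ _

lemma exists_block (m k : Nat) (hk : k < (wPrefix m).length) :
    ∃ j, j < m ∧ (wPrefix j).length ≤ k ∧ k < (wPrefix (j + 1)).length := by
  induction m with
  | zero => simp [wPrefix] at hk
  | succ m ih =>
    by_cases h : k < (wPrefix m).length
    · obtain ⟨j, hj⟩ := ih h
      exact ⟨j, by omega, hj.2⟩
    · exact ⟨m, by omega, by omega, hk⟩

lemma infix_of_middle {α : Type} (A B C u p v : List α)
    (h : A ++ (B ++ C) = u ++ (p ++ v)) (h1 : A.length ≤ u.length)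
    (h2 : u.length + p.length ≤ A.length + B.length) : p <:+: B := by
  have hp : p = ((A ++ (B ++ C)).drop u.length).take p.length := by
    rw [h, List.drop_left, List.take_left]
  rw [List.drop_append] at hp
  rw [List.drop_eq_nil_of_le h1, List.nil_append] at hp
  rw [List.drop_append] at hp
  rw [List.take_append_of_le_length (by simp; omega)] at hp
  rw [hp]
  exact ((B.drop _).take_prefix _).isInfix.trans (B.drop_suffix _).isInfix

/-- concrete small values of tm -/
lemma tm_vals : tm 0 = 0 ∧ tm 1 = 1 ∧ tm 2 = 1 ∧ tm 3 = 0 ∧ tm 4 = 1 ∧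
    tm 5 = 0 ∧ tm 6 = 0 ∧ tm 7 = 1 := by
  have h0 : tm 0 = 0 := tm_zero
  have h1 : tm 1 = 1 := by have := tm_two_mul_add_one 0; simp [h0] at this; omega
  have h2 : tm 2 = 1 := by have := tm_two_mul 1; simp [h1] at this; omega
  have h3 : tm 3 = 0 := by have := tm_two_mul_add_one 1; rw [h1] at this; simpa using this
  have h4 : tm 4 = 1 := by have := tm_two_mul 2; simpa [h2] using this
  have h5 : tm 5 = 0 := by have := tm_two_mul_add_one 2; rw [h2] at this; simpa using this
  have h6 : tm 6 = 0 := by have := tm_two_mul 3; simpa [h3] using this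
  have h7 : tm 7 = 1 := by have := tm_two_mul_add_one 3; rw [h3] at this; simpa using this
  exact ⟨h0, h1, h2, h3, h4, h5, h6, h7⟩

lemma triple_match (q : Nat) : ∃ q', q' ≤ 5 ∧ tm q' = tm q ∧
    tm (q' + 1) = tm (q + 1) ∧ tm (q' + 2) = tm (q + 2) := by
  obtain ⟨h0, h1, h2, h3, h4, h5, h6, h7⟩ := tm_vals
  have hne : tm q ≠ tm (q + 1) ∨ tm (q + 1) ≠ tm (q + 2) := by
    rcases Nat.even_or_odd q with ⟨c, hc⟩ | ⟨c, hc⟩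
    · left
      have := tm_two_mul c; have := tm_two_mul_add_one c
      have := tm_lt_two c
      subst hc
      rw [(by ring : c + c = 2 * c)]
      omega
    · right
      have := tm_two_mul (c + 1); have := tm_two_mul_add_one (c + 1)
      have := tm_lt_two (c + 1)
      subst hc
      rw [(by ring : 2 * c + 1 + 1 = 2 * (c + 1)), (by ring : 2 * c + 1 + 2 = 2 * (c + 1) + 1)]
      omega
  have ha := tm_lt_two q; have hb := tm_lt_two (q + 1); have hc := tm_lt_two (q + 2)
  set a := tm q with hA; set b := tm (q + 1) with hB; set c := tm (q + 2) with hC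
  interval_cases a <;> interval_cases b <;> interval_cases c
  · rcases hne with h | h <;> simp at h
  · exact ⟨5, by norm_num, by norm_num; omega, by norm_num; omega, by norm_num; omega⟩
  · exact ⟨3, by norm_num, by norm_num; omega, by norm_num; omega, by norm_num; omega⟩
  · exact ⟨0, by norm_num, by norm_num; omega, by norm_num; omega, by norm_num; omega⟩
  · exact ⟨4, by norm_num, by norm_num; omega, by norm_num; omega, by norm_num; omega⟩
  · exact ⟨2, by norm_num, by norm_num; omega, by norm_num; omega, by norm_num; omega⟩
  · exact ⟨1, by norm_num, by norm_num; omega, by norm_num; omega, by norm_num; omega⟩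
  · rcases hne with h | h <;> simp at h

lemma recurrence (j : Nat) : ∃ j', j' < 48 ∧ ∀ i, i < 17 → tm (j' + i) = tm (j + i) := by
  obtain ⟨q', hq5, e0, e1, e2⟩ := triple_match (j / 8)
  refine ⟨8 * q' + j % 8, by omega, fun i hi => ?_⟩
  have key : ∀ a b : Nat, b < 8 → tm (8 * a + b) = (tm a + tm b) % 2 := tm_eight_mul_add
  have hj : j = 8 * (j / 8) + j % 8 := by omega
  set r := j % 8 with hr
  have hd : (r + i) / 8 ≤ 2 := by omega
  have h1 : 8 * q' + r + i = 8 * (q' + (r + i) / 8) + (r + i) % 8 := by omega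
  have h2 : j + i = 8 * (j / 8 + (r + i) / 8) + (r + i) % 8 := by omega
  rw [h1, h2, key _ _ (by omega), key _ _ (by omega)]
  have : tm (q' + (r + i) / 8) = tm (j / 8 + (r + i) / 8) := by
    interval_cases h : (r + i) / 8
    · simpa using e0
    · simpa using e1
    · simpa using e2
  rw [this]

/-- chunk depends only on the `tm` values. -/
lemma chunk_congr (j j' : Nat) (h : ∀ i, i < 17 → tm (j' + i) = tm (j + i)) :
    chunk j' 17 = chunk j 17 := by
  unfold chunk
  rw [List.range'_eq_map_range, List.range'_eq_map_range]
  rw [List.map_map, List.map_map]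
  refine congrArg List.flatten ?_
  apply List.map_congr_left
  intro i hi
  rw [List.mem_range] at hi
  simp only [Function.comp_apply, wBlock, h i hi]

/-- Lemma B: every short factor of **w** occurs in `wPrefix 64`. -/
lemma factor_transfer (m : Nat) (p : List Bool) (hp : p <:+: wPrefix m)
    (hlen : p.length ≤ 64) : p <:+: wPrefix 64 := by
  rcases List.eq_nil_or_concat p with rfl | hne
  · exact List.nil_infix
  have hpne : p ≠ [] := by rcases hne with ⟨_, _, rfl⟩; simp
  obtain ⟨u, v, huv⟩ := hp
  have huv' : wPrefix (m + 17) = u ++ (p ++ (v ++ chunk m 17)) := by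
    rw [wPrefix_add, ← huv]; simp [List.append_assoc]
  have hu_lt : u.length < (wPrefix m).length := by
    have := congrArg List.length huv
    simp [List.length_append] at this
    have : 0 < p.length := List.length_pos_iff.2 hpne
    omega
  obtain ⟨j, hjm, hj1, hj2⟩ := exists_block m u.length hu_lt
  have hsplit : wPrefix (m + 17) = wPrefix j ++ (chunk j 17 ++ chunk (j + 17) (m - j)) := by
    have e1 : wPrefix (m + 17) = wPrefix (j + 17) ++ chunk (j + 17) (m - j) := by
      have : m + 17 = (j + 17) + (m - j) := by omega
      rw [this, wPrefix_add]
    rw [e1, wPrefix_add]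
    simp [List.append_assoc]
  have hchunklen : (chunk j 17).length = 4 * 17 + (sumT (j + 17) - sumT j) := by
    have := congrArg List.length (wPrefix_add j 17)
    rw [length_wPrefix, List.length_append, length_wPrefix] at this
    have hmono := sumT_mono (by omega : j ≤ j + 17)
    omega
  have hsum : sumT j + tm j ≤ sumT (j + 17) := by
    have h1 : sumT (j + 1) = sumT j + tm j := sumT_succ j
    have := sumT_mono (by omega : j + 1 ≤ j + 17)
    omega
  have hinB : p <:+: chunk j 17 := by
    apply infix_of_middle (wPrefix j) (chunk j 17) (chunk (j + 17) (m - j)) u p (v ++ chunk m 17)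
      (by rw [← hsplit, ← huv']) hj1
    rw [length_wPrefix] at hj1 ⊢
    rw [length_wPrefix, sumT_succ] at hj2
    have := tm_lt_two j
    omega
  obtain ⟨j', hj48, hjeq⟩ := recurrence j
  rw [← chunk_congr j j' hjeq] at hinB
  have h2 : chunk j' 17 <:+: wPrefix (j' + 17) := by
    rw [wPrefix_add]; exact (List.suffix_append _ _).isInfix
  exact (hinB.trans h2).trans ((wPrefix_prefix _ 64 (by omega)).isInfix)

/-! ### The finite check -/

def wBlockF (i : Nat) : List Bool := [false, false] ++ List.replicate (tm' i + 2) true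
def wPrefixF (n : Nat) : List Bool := ((List.range n).map wBlockF).flatten

lemma wPrefixF_eq (n : Nat) : wPrefix n = wPrefixF n := by
  unfold wPrefix wPrefixF
  refine congrArg List.flatten (List.map_congr_left fun i _ => ?_)
  simp [wBlock, wBlockF, tm'_eq]

set_option maxRecDepth 10000 in
theorem check64 : ∀ s ∈ (wPrefixF 64).tails, ∀ n ∈ List.range 17,
    n = 0 ∨ ¬ (n ≤ s.length ∧
      (s.take n) ++ ((s.take n) ++ (((s.take n).map (fun b => !b)) ++ (s.take n))) <+: s) := by
  decide

/-! ### Main theorem -/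

theorem stmt7 (x : List Bool) (hx : x ≠ []) :
    ¬ IsFactorW (x ++ x ++ (List.map (fun b => !b) x) ++ x) := by
  rintro ⟨m, hinf⟩
  obtain ⟨u, v, huv⟩ := hinf
  have hA : wPrefix m = (u ++ x ++ x) ++ ((x.map (fun b => !b)) ++ x) ++ v := by
    rw [← huv]; simp [List.append_assoc]
  have hx16 : x.length ≤ 16 := length_le_16 m x _ v hA
  have hlen : (x ++ x ++ (List.map (fun b => !b) x) ++ x).length ≤ 64 := by
    simp [List.length_append, List.length_map]; omega
  have h64 : (x ++ x ++ (List.map (fun b => !b) x) ++ x) <:+: wPrefix 64 :=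
    factor_transfer m _ ⟨u, v, huv⟩ hlen
  rw [wPrefixF_eq] at h64
  obtain ⟨s, hps, hs⟩ := List.infix_iff_prefix_suffix.1 h64
  have hsmem : s ∈ (wPrefixF 64).tails := (List.mem_tails _ _).2 hs
  have hxpre : x <+: s := by
    refine List.IsPrefix.trans ?_ hps
    refine ⟨x ++ (List.map (fun b => !b) x) ++ x, by simp [List.append_assoc]⟩
  have hxs : x = s.take x.length := List.prefix_iff_eq_take.1 hxpre
  have hmem : x.length ∈ List.range 17 := List.mem_range.2 (by omega)
  rcases check64 s hsmem x.length hmem with h0 | hnot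
  · exact hx (List.eq_nil_of_length_eq_zero h0)
  · apply hnot
    refine ⟨hxpre.length_le, ?_⟩
    rw [← hxs]
    have : x ++ (x ++ ((x.map (fun b => !b)) ++ x)) = x ++ x ++ (List.map (fun b => !b) x) ++ x := by
      simp [List.append_assoc]
    rw [this]
    exact hps
end

section
/- Let u = ∏_{i≥0} 0·1^{t_i+2}, where t_i is the Thue–Morse sequence. Then u contains no factor of the form x·x·x·x with x a nonempty binary word. -/
/-- Block `0 1^(t_i+2)` of the word **u**. -/
def uBlock (i : Nat) : List Bool := [false] ++ List.replicate (tm i + 2) true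

def uPrefix (n : Nat) : List Bool := ((List.range n).map uBlock).flatten

/-- `L` is a factor of the infinite word **u**. -/
def IsFactorU (L : List Bool) : Prop := ∃ n, L <:+: uPrefix n

lemma tm_le (i : Nat) : tm i ≤ 1 := Nat.lt_succ_iff.mp (Nat.mod_lt _ (by norm_num))

lemma tm_even (i : Nat) : tm (2 * i) = tm i := by
  rcases Nat.eq_zero_or_pos i with h | h
  · simp [h]
  · unfold tm
    rw [Nat.digits_def' (by norm_num : (1:ℕ) < 2) (by omega)]
    simp [Nat.mul_div_cancel_left _ (by norm_num : (0:ℕ) < 2), Nat.mul_mod_right]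

lemma tm_odd (i : Nat) : tm (2 * i + 1) = (tm i + 1) % 2 := by
  unfold tm
  rw [Nat.digits_def' (by norm_num : (1:ℕ) < 2) (by omega)]
  have h1 : (2 * i + 1) % 2 = 1 := by omega
  have h2 : (2 * i + 1) / 2 = i := by omega
  rw [h1, h2]
  simp [List.sum_cons]
  omega

lemma tm_succ_of_even (a : Nat) : tm (2*a+1) ≠ tm (2*a) := by
  rw [tm_odd, tm_even]
  have := tm_le a; omega

/-- no three consecutive equal values in Thue–Morse -/
lemma no_three (s : Nat) : ¬ (tm s = tm (s+1) ∧ tm (s+1) = tm (s+2)) := by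
  rintro ⟨h1, h2⟩
  rcases Nat.even_or_odd s with ⟨a, ha⟩ | ⟨a, ha⟩
  · rw [← two_mul] at ha
    subst ha
    have := tm_succ_of_even a
    omega
  · subst ha
    have := tm_succ_of_even (a+1)
    have e1 : 2*a+1+1 = 2*(a+1) := by ring
    have e2 : 2*a+1+2 = 2*(a+1)+1 := by ring
    rw [e1, e2] at h2
    omega

/-- Thue–Morse is overlap-free. -/
lemma no_overlap (k : Nat) (hk : 1 ≤ k) (m : Nat) :
    ¬ ∀ i ≤ k, tm (m + i) = tm (m + k + i) := by
  induction k using Nat.strong_induction_on generalizing m with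
  | _ k IH =>
  intro H
  rcases Nat.lt_or_ge k 2 with hk2 | hk2
  · have hk1 : k = 1 := by omega
    subst hk1
    have h0 := H 0 (by omega)
    have h1 := H 1 (by omega)
    exact no_three m ⟨by simpa using h0, by simpa using h1⟩
  rcases Nat.even_or_odd k with ⟨q, hq⟩ | ⟨h, hh⟩
  · have hq1 : 1 ≤ q := by omega
    rcases Nat.even_or_odd m with ⟨a, ha⟩ | ⟨a, ha⟩
    · apply IH q (by omega) hq1 a
      intro i hi
      have := H (2*i) (by omega)
      have e1 : m + 2*i = 2*(a+i) := by omega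
      have e2 : m + k + 2*i = 2*(a+q+i) := by omega
      rw [e1, e2, tm_even, tm_even] at this
      simpa [Nat.add_assoc] using this
    · apply IH q (by omega) hq1 a
      intro i hi
      have := H (2*i) (by omega)
      have e1 : m + 2*i = 2*(a+i)+1 := by omega
      have e2 : m + k + 2*i = 2*(a+q+i)+1 := by omega
      rw [e1, e2, tm_odd, tm_odd] at this
      have t1 := tm_le (a+i); have t2 := tm_le (a+q+i)
      have : tm (a+i) = tm (a+q+i) := by omega
      simpa [Nat.add_assoc] using this
  · have hh1 : 1 ≤ h := by omega
    have h0 := H 0 (by omega)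
    have h1 := H 1 (by omega)
    have h2 := H 2 (by omega)
    have h3 := H 3 (by omega)
    rcases Nat.even_or_odd m with ⟨a, ha⟩ | ⟨a, ha⟩
    · have e0 : m + 0 = 2*a := by omega
      have e0' : m + k + 0 = 2*(a+h)+1 := by omega
      have e1 : m + 1 = 2*a+1 := by omega
      have e1' : m + k + 1 = 2*(a+h+1) := by omega
      have e2 : m + 2 = 2*(a+1) := by omega
      have e2' : m + k + 2 = 2*(a+h+1)+1 := by omega
      have e3 : m + 3 = 2*(a+1)+1 := by omega
      have e3' : m + k + 3 = 2*(a+h+2) := by omega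
      rw [e0, e0', tm_even, tm_odd] at h0
      rw [e1, e1', tm_odd, tm_even] at h1
      rw [e2, e2', tm_even, tm_odd] at h2
      rw [e3, e3', tm_odd, tm_even] at h3
      apply no_three (a+h)
      have t1 := tm_le a; have t2 := tm_le (a+h); have t3 := tm_le (a+1)
      have t4 := tm_le (a+h+1); have t5 := tm_le (a+h+2)
      constructor <;> omega
    · have e0 : m + 0 = 2*a+1 := by omega
      have e0' : m + k + 0 = 2*(a+h+1) := by omega
      have e1 : m + 1 = 2*(a+1) := by omega
      have e1' : m + k + 1 = 2*(a+h+1)+1 := by omega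
      have e2 : m + 2 = 2*(a+1)+1 := by omega
      have e2' : m + k + 2 = 2*(a+h+2) := by omega
      have e3 : m + 3 = 2*(a+2) := by omega
      have e3' : m + k + 3 = 2*(a+h+2)+1 := by omega
      rw [e0, e0', tm_odd, tm_even] at h0
      rw [e1, e1', tm_even, tm_odd] at h1
      rw [e2, e2', tm_odd, tm_even] at h2
      rw [e3, e3', tm_even, tm_odd] at h3
      apply no_three a
      have t1 := tm_le a; have t2 := tm_le (a+1); have t3 := tm_le (a+2)
      have t4 := tm_le (a+h+1); have t5 := tm_le (a+h+2)
      have ea1 : a + 1 + 1 = a + 2 := by omega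
      rw [ea1]
      omega

def bS (i : Nat) : Nat := ((List.range i).map (fun j => tm j + 3)).sum

lemma bS_succ (i : Nat) : bS (i+1) = bS i + (tm i + 3) := by
  simp [bS, List.range_succ]

lemma bS_mono : StrictMono bS := by
  apply strictMono_nat_of_lt_succ
  intro n; rw [bS_succ]; omega

lemma bS_add_le (i j : Nat) : bS (i+j) ≤ bS i + 4*j := by
  induction j with
  | zero => simp
  | succ j IH =>
    have := tm_le (i+j)
    rw [show i + (j+1) = (i+j)+1 by omega, bS_succ]
    omega

lemma bS_le_add (i j : Nat) : bS i + 3*j ≤ bS (i+j) := by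
  induction j with
  | zero => simp
  | succ j IH =>
    rw [show i + (j+1) = (i+j)+1 by omega, bS_succ]
    omega

lemma uBlock_length (i : Nat) : (uBlock i).length = tm i + 3 := by
  simp [uBlock]

lemma uPrefix_succ (n : Nat) : uPrefix (n+1) = uPrefix n ++ uBlock n := by
  simp [uPrefix, List.range_succ]

lemma uPrefix_length (n : Nat) : (uPrefix n).length = bS n := by
  induction n with
  | zero => rfl
  | succ n IH => rw [uPrefix_succ, List.length_append, IH, uBlock_length, bS_succ]

lemma char (n q : Nat) (h : q < bS n) :
    ((uPrefix n)[q]'(by rw [uPrefix_length]; exact h) = false) ↔ ∃ i, bS i = q := by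
  induction n with
  | zero => simp [bS] at h
  | succ n IH =>
    rcases Nat.lt_or_ge q (bS n) with hq | hq
    · simp only [uPrefix_succ]
      rw [List.getElem_append_left (by rw [uPrefix_length]; exact hq)]
      exact IH hq
    · simp only [uPrefix_succ]
      rw [List.getElem_append_right (by rw [uPrefix_length]; exact hq)]
      rcases Nat.eq_or_lt_of_le hq with he | hlt
      · have : q - (uPrefix n).length = 0 := by rw [uPrefix_length]; omega
        simp only [this]
        simp only [uBlock]
        constructor
        · intro _; exact ⟨n, he⟩
        · intro _; rfl
      · have hb : q < bS (n+1) := h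
        rw [bS_succ] at hb
        have hk : q - (uPrefix n).length ≥ 1 := by rw [uPrefix_length]; omega
        have hval : (uBlock n)[q - (uPrefix n).length]'(by
            rw [uPrefix_length, uBlock_length]; omega) = true := by
          simp only [uBlock, List.singleton_append]
          rw [List.getElem_cons]
          simp only [dif_neg (by omega : ¬ (q - (uPrefix n).length = 0))]
          apply List.getElem_replicate
        rw [hval]
        simp only [Bool.true_eq_false, false_iff]
        rintro ⟨i, hi⟩
        have h1 : n < i := bS_mono.lt_iff_lt.mp (by omega)
        have h2 : i < n + 1 := bS_mono.lt_iff_lt.mp (by omega)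
        omega

/-- characterization via getElem? -/
lemma char' (n q : Nat) (h : q < bS n) :
    ((uPrefix n)[q]? = some false) ↔ ∃ i, bS i = q := by
  rw [List.getElem?_eq_getElem (by rw [uPrefix_length]; exact h)]
  rw [Option.some_inj]
  exact char n q h

/-- two consecutive block starts at distance 3 -/
lemma consec3 (j j' : Nat) (h : bS j' = bS j + 3) : j' = j + 1 ∧ tm j = 0 := by
  have hlt : j < j' := bS_mono.lt_iff_lt.mp (by omega)
  have hle : bS (j+1) ≤ bS j' := bS_mono.monotone (by omega)
  rw [bS_succ] at hle
  have htm : tm j = 0 := by omega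
  have : bS (j+1) = bS j' := by rw [bS_succ]; omega
  exact ⟨(bS_mono.injective this).symm, htm⟩

theorem stmt14 (x : List Bool) (hx : x ≠ []) :
    ¬ IsFactorU (x ++ x ++ x ++ x) := by
  rintro ⟨n, s, t2, hst⟩
  set p := x.length with hp_def
  have hp : 1 ≤ p := List.length_pos_iff.mpr hx
  set x4 := x ++ x ++ x ++ x with hx4_def
  have hx4len : x4.length = 4 * p := by simp [hx4_def]; omega
  set off := s.length with hoff_def
  have hlen : off + 4 * p ≤ bS n := by
    have := congrArg List.length hst
    simp [uPrefix_length, hx4len] at this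
    omega
  rw [List.append_assoc] at hst
  -- value of uPrefix at off + r
  have hval : ∀ r, r < 4 * p → (uPrefix n)[off + r]? = x4[r]? := by
    intro r hr
    rw [← hst]
    rw [List.getElem?_append_right (by omega : s.length ≤ off + r)]
    rw [show off + r - s.length = r by omega]
    rw [List.getElem?_append_left (by rw [hx4len]; omega)]
  -- characterization transported
  have hchar : ∀ q, off ≤ q → q < off + 4 * p →
      ((x4[q - off]? = some false) ↔ ∃ i, bS i = q) := by
    intro q h1 h2
    have hv := hval (q - off) (by omega)
    rw [show off + (q - off) = q by omega] at hv
    rw [← hv]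
    exact char' n q (by omega)
  -- periodicity of x4
  have hper : ∀ r, r < 3 * p → x4[r]? = x4[r + p]? := by
    intro r hr
    have h1 : x4 = (x ++ x ++ x) ++ x := by simp [hx4_def]
    have h2 : x4 = x ++ (x ++ x ++ x) := by simp [hx4_def]
    have hw : (x ++ x ++ x).length = 3 * p := by simp; omega
    conv_lhs => rw [h1]
    conv_rhs => rw [h2]
    rw [List.getElem?_append_left (by rw [hw]; omega)]
    rw [List.getElem?_append_right (by omega : x.length ≤ r + p)]
    rw [show r + p - x.length = r by omega]
  -- key periodicity of block-start positions
  have keyiff : ∀ q, off ≤ q → q < off + 3 * p →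
      ((∃ i, bS i = q) ↔ (∃ i, bS i = q + p)) := by
    intro q h1 h2
    rw [← hchar q h1 (by omega), ← hchar (q + p) (by omega) (by omega)]
    rw [show q + p - off = q - off + p by omega]
    rw [hper (q - off) (by omega)]
  by_cases hfalse : false ∈ x
  · -- x contains a false
    obtain ⟨q0, hq0lt, hq0⟩ := List.mem_iff_getElem.mp hfalse
    have hq0p : q0 < p := hq0lt
    have hx4q0 : x4[q0]? = some false := by
      have h2 : x4 = x ++ (x ++ x ++ x) := by simp [hx4_def]
      rw [h2, List.getElem?_append_left hq0lt,
        List.getElem?_eq_getElem hq0lt, hq0]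
    have F0 : ∃ i, bS i = off + q0 := by
      have := hchar (off + q0) (by omega) (by omega)
      rw [show off + q0 - off = q0 by omega] at this
      exact this.mp hx4q0
    rcases Nat.lt_or_ge p 3 with hple | hpge3
    · -- p ≤ 2 : two block starts too close
      have F1 : ∃ i, bS i = off + q0 + p :=
        (keyiff (off + q0) (by omega) (by omega)).mp F0
      obtain ⟨j1, hj1⟩ := F0
      obtain ⟨j2, hj2⟩ := F1
      have hlt : j1 < j2 := bS_mono.lt_iff_lt.mp (by omega)
      have hle : bS (j1 + 1) ≤ bS j2 := bS_mono.monotone (by omega)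
      rw [bS_succ] at hle
      omega
    rcases Nat.lt_or_ge p 4 with hpeq3 | hp4
    · -- p = 3 : four block starts at mutual distance 3
      have hp3 : p = 3 := by omega
      have F1 : ∃ i, bS i = off + q0 + 3 := by
        have := (keyiff (off + q0) (by omega) (by omega)).mp F0
        rwa [hp3] at this
      have F2 : ∃ i, bS i = off + q0 + 6 := by
        have := (keyiff (off + q0 + 3) (by omega) (by omega)).mp F1
        rw [hp3] at this
        rwa [show off + q0 + 3 + 3 = off + q0 + 6 by omega] at this
      have F3 : ∃ i, bS i = off + q0 + 9 := by
        have := (keyiff (off + q0 + 6) (by omega) (by omega)).mp F2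
        rw [hp3] at this
        rwa [show off + q0 + 6 + 3 = off + q0 + 9 by omega] at this
      obtain ⟨j0, hj0⟩ := F0
      obtain ⟨j1, hj1⟩ := F1
      obtain ⟨j2, hj2⟩ := F2
      obtain ⟨j3, hj3⟩ := F3
      obtain ⟨e1, t1⟩ := consec3 j0 j1 (by omega)
      obtain ⟨e2, t2'⟩ := consec3 j1 j2 (by omega)
      obtain ⟨e3, t3⟩ := consec3 j2 j3 (by omega)
      apply no_three j0
      constructor
      · rw [← e1]; omega
      · rw [← e1, show j0 + 2 = j2 by omega]
        omega
    · -- p ≥ 4 : build an overlap in Thue–Morse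
      obtain ⟨i0, hi0⟩ := F0
      have hi0a : off ≤ bS i0 := by omega
      have F1 : ∃ i, bS i = bS i0 + p :=
        (keyiff (bS i0) hi0a (by omega)).mp ⟨i0, rfl⟩
      obtain ⟨j', hj'⟩ := F1
      have hij : i0 < j' := bS_mono.lt_iff_lt.mp (by omega)
      set d := j' - i0 with hd_def
      have hd1 : 1 ≤ d := by omega
      have hd3 : 3 * d ≤ p := by
        have := bS_le_add i0 d
        rw [show i0 + d = j' by omega] at this
        omega
      have hstep : ∀ i, i ≤ d → bS (i0 + i + d) = bS (i0 + i) + p →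
          bS (i0 + (i + 1) + d) = bS (i0 + (i + 1)) + p := by
        intro i hi hSi
        have hub : bS (i0 + (i + 1)) ≤ bS i0 + 4 * (i + 1) := bS_add_le i0 (i + 1)
        have hwin : bS (i0 + (i + 1)) < off + 3 * p := by omega
        have hlo : off ≤ bS (i0 + (i + 1)) :=
          le_trans hi0a (bS_mono.monotone (by omega))
        obtain ⟨j, hj⟩ := (keyiff (bS (i0 + (i + 1))) hlo hwin).mp ⟨i0 + (i + 1), rfl⟩
        have hmono1 : bS (i0 + i) < bS (i0 + (i + 1)) := bS_mono (by omega)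
        have hjgt : i0 + i + d < j := bS_mono.lt_iff_lt.mp (by omega)
        by_cases hcase : j = i0 + i + d + 1
        · rw [hcase] at hj
          rw [show i0 + (i + 1) + d = i0 + i + d + 1 by omega]
          exact hj
        · exfalso
          have hq1 : bS (i0 + i + d) < bS (i0 + i + d + 1) := bS_mono (by omega)
          have hq2 : bS (i0 + i + d + 1) < bS j := bS_mono (by omega)
          have hm0 : bS i0 ≤ bS (i0 + i) := bS_mono.monotone (by omega)
          have hr1 : off ≤ bS (i0 + i + d + 1) - p := by omega
          have hr2 : bS (i0 + i + d + 1) - p < off + 3 * p := by omega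
          obtain ⟨j'', hj''⟩ := (keyiff (bS (i0 + i + d + 1) - p) hr1 hr2).mpr
            ⟨i0 + i + d + 1, by omega⟩
          have c1 : i0 + i < j'' := bS_mono.lt_iff_lt.mp (by omega)
          have c2 : j'' < i0 + (i + 1) := bS_mono.lt_iff_lt.mp (by omega)
          omega
      have hclaim : ∀ i, i ≤ d + 1 → bS (i0 + i + d) = bS (i0 + i) + p := by
        intro i
        induction i with
        | zero =>
          intro _
          rw [show i0 + 0 + d = j' by omega, show i0 + 0 = i0 by omega]
          exact hj'
        | succ i IH =>
          intro hi
          exact hstep i (by omega) (IH (by omega))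
      apply no_overlap d hd1 i0
      intro i hi
      have e1 := hclaim i (by omega)
      have e2 := hclaim (i + 1) (by omega)
      rw [show i0 + (i + 1) + d = (i0 + i + d) + 1 by omega, bS_succ,
        show i0 + (i + 1) = (i0 + i) + 1 by omega, bS_succ] at e2
      rw [show i0 + d + i = i0 + i + d by omega]
      omega
  · -- x is all true
    have hall : ∀ r (hr : r < 4 * p), x4[r]'(by rw [hx4len]; omega) = true := by
      intro r hr
      have hmem : x4[r]'(by rw [hx4len]; omega) ∈ x4 := List.getElem_mem _
      have h4 : ∀ b ∈ x4, b = true := by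
        intro b hb
        simp only [hx4_def, List.mem_append] at hb
        rcases hb with ((hb | hb) | hb) | hb <;>
          · cases b
            · exact absurd hb hfalse
            · rfl
      exact h4 _ hmem
    have hex : ∃ i, off ≤ bS i := ⟨n, by omega⟩
    have hi0 : off ≤ bS (Nat.find hex) := Nat.find_spec hex
    set i0 := Nat.find hex with hi0_def
    have hi0ub : bS i0 ≤ off + 3 := by
      rcases Nat.eq_zero_or_pos i0 with h0 | h0
      · have hz : bS 0 = 0 := rfl
        rw [h0]; omega
      · have hmin : ¬ off ≤ bS (i0 - 1) := Nat.find_min hex (by omega)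
        have hsucc := bS_succ (i0 - 1)
        rw [show i0 - 1 + 1 = i0 by omega] at hsucc
        have := tm_le (i0 - 1)
        omega
    have hr4 : bS i0 - off < 4 * p := by omega
    have hF := (hchar (bS i0) hi0 (by omega)).mpr ⟨i0, rfl⟩
    rw [List.getElem?_eq_getElem (by rw [hx4len]; omega)] at hF
    rw [hall (bS i0 - off) hr4] at hF
    simp at hF
end
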